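/- arXiv:1204.4248 — 5 statements merged into one kernel-verified Lean document; each statement's English description precedes it below -/
import Mathlib

section
/- For any θ > 0 and any p < 1 (including p ≤ 0), the function f(y) = θ²/(θ+1) (1-p)(1+y) e^{-θy} [1 - p(1 + θy/(θ+1))e^{-θy}]^{-2} is a probability density on (0,∞): it is nonnegative and integrates to 1. -/
open MeasureTheory Real Filter

theorem lg_is_density (θ p : ℝ) (hθ : 0 < θ) (hp : p < 1) :
    (∀ y : ℝ, 0 < y →
      0 ≤ θ^2 / (θ + 1) * (1 - p) * (1 + y) * Real.exp (-θ * y) *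
        (1 - p * ((1 + θ * y / (θ + 1)) * Real.exp (-θ * y)))⁻¹ ^ 2) ∧
    ∫ y in Set.Ioi (0:ℝ),
        θ^2 / (θ + 1) * (1 - p) * (1 + y) * Real.exp (-θ * y) *
          (1 - p * ((1 + θ * y / (θ + 1)) * Real.exp (-θ * y)))⁻¹ ^ 2 = 1 := by
  have hθ1 : 0 < θ + 1 := by linarith
  have h1p : 0 < 1 - p := by linarith
  set G : ℝ → ℝ := fun y => (1 + θ * y / (θ + 1)) * Real.exp (-θ * y) with hGdef
  have hGpos : ∀ y : ℝ, 0 ≤ y → 0 < G y := by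
    intro y hy
    have : 0 < 1 + θ * y / (θ + 1) := by positivity
    exact mul_pos this (Real.exp_pos _)
  have hGle : ∀ y : ℝ, 0 ≤ y → G y ≤ 1 := by
    intro y hy
    have hd : θ * y / (θ + 1) ≤ θ * y :=
      div_le_self (by positivity) (by linarith)
    have h1 : 1 + θ * y / (θ + 1) ≤ Real.exp (θ * y) := by
      linarith [Real.add_one_le_exp (θ * y)]
    calc G y ≤ Real.exp (θ * y) * Real.exp (-θ * y) :=
          mul_le_mul_of_nonneg_right h1 (Real.exp_pos _).le
      _ = 1 := by rw [← Real.exp_add]; norm_num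
  have hden : ∀ y : ℝ, 0 ≤ y → 0 < 1 - p * G y := by
    intro y hy
    rcases le_or_gt p 0 with h | h
    · nlinarith [hGpos y hy, hGle y hy]
    · nlinarith [hGpos y hy, hGle y hy]
  -- nonnegativity of the integrand
  have hnonneg : ∀ y : ℝ, 0 < y →
      0 ≤ θ^2 / (θ + 1) * (1 - p) * (1 + y) * Real.exp (-θ * y) *
        (1 - p * ((1 + θ * y / (θ + 1)) * Real.exp (-θ * y)))⁻¹ ^ 2 := by
    intro y hy
    positivity
  refine ⟨hnonneg, ?_⟩
  -- derivative of G
  have hGd : ∀ y : ℝ, HasDerivAt G (-(θ^2 / (θ + 1)) * ((1 + y) * Real.exp (-θ * y))) y := by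
    intro y
    have h1 : HasDerivAt (fun y : ℝ => 1 + θ * y / (θ + 1)) (θ / (θ + 1)) y := by
      simpa using (((hasDerivAt_id y).const_mul θ).div_const (θ + 1)).const_add 1
    have h2 : HasDerivAt (fun y : ℝ => Real.exp (-θ * y)) (-θ * Real.exp (-θ * y)) y := by
      simpa [mul_comm] using ((hasDerivAt_id y).const_mul (-θ)).exp
    have := h1.mul h2
    refine this.congr_deriv ?_
    field_simp
    ring
  set Φ : ℝ → ℝ := fun y => (1 - G y) / (1 - p * G y) with hΦdef
  have hΦd : ∀ y : ℝ, 0 ≤ y → HasDerivAt Φ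
      (θ^2 / (θ + 1) * (1 - p) * (1 + y) * Real.exp (-θ * y) *
        (1 - p * G y)⁻¹ ^ 2) y := by
    intro y hy
    have hD := (hden y hy).ne'
    have hnum : HasDerivAt (fun y => 1 - G y)
        (-(-(θ^2 / (θ + 1)) * ((1 + y) * Real.exp (-θ * y)))) y := (hGd y).const_sub 1
    have hden' : HasDerivAt (fun y => 1 - p * G y)
        (-(p * (-(θ^2 / (θ + 1)) * ((1 + y) * Real.exp (-θ * y))))) y :=
      ((hGd y).const_mul p).const_sub 1
    have := hnum.div hden' hD
    refine this.congr_deriv ?_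
    generalize G y = g at hD ⊢
    field_simp
    ring
  -- limit at infinity
  have hG0 : Tendsto G atTop (nhds 0) := by
    have hcomp : Tendsto (fun y : ℝ => θ * y) atTop atTop :=
      Tendsto.const_mul_atTop hθ tendsto_id
    have hinner : Tendsto (fun t : ℝ => (1 + t / (θ + 1)) * Real.exp (-t)) atTop (nhds 0) := by
      have h1 : Tendsto (fun t : ℝ => Real.exp (-t)) atTop (nhds 0) :=
        Real.tendsto_exp_neg_atTop_nhds_zero
      have h2 : Tendsto (fun t : ℝ => t * Real.exp (-t)) atTop (nhds 0) := by
        simpa using Real.tendsto_pow_mul_exp_neg_atTop_nhds_zero 1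
      have := h1.add ((h2.const_mul (1 / (θ + 1))))
      simp only [add_zero, mul_zero] at this
      convert this using 2 with t
      ring
    have h3 := hinner.comp hcomp
    rw [hGdef]
    simpa [Function.comp_def, neg_mul] using h3
  have hΦtop : Tendsto Φ atTop (nhds 1) := by
    have hc1 : Tendsto (fun _ : ℝ => (1:ℝ)) atTop (nhds 1) := tendsto_const_nhds
    have h1 : Tendsto (fun y => 1 - G y) atTop (nhds 1) := by
      have := hc1.sub hG0; rwa [sub_zero] at this
    have hpg : Tendsto (fun y => p * G y) atTop (nhds 0) := by
      have := hG0.const_mul p; rwa [mul_zero] at this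
    have h2 : Tendsto (fun y => 1 - p * G y) atTop (nhds 1) := by
      have := hc1.sub hpg; rwa [sub_zero] at this
    have h3 := h1.div h2 one_ne_zero
    norm_num at h3
    rw [hΦdef]
    exact h3
  have hG1 : G 0 = 1 := by rw [hGdef]; norm_num
  have hΦ0 : Φ 0 = 0 := by rw [hΦdef]; simp [hG1]
  have hcont : ContinuousWithinAt Φ (Set.Ici 0) 0 :=
    (hΦd 0 le_rfl).continuousAt.continuousWithinAt
  have key := integral_Ioi_of_hasDerivAt_of_nonneg hcont
    (fun x hx => hΦd x (le_of_lt hx)) (fun x hx => hnonneg x hx) hΦtop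
  rw [key, hΦ0, sub_zero]
end

section
/- If p₁ > p₂ (both less than 1) and θ > 0, then the ratio of LG densities f_{p₁,θ}(t)/f_{p₂,θ}(t) is a decreasing function of t on (0,∞) (likelihood ratio ordering). -/
lemma lg_u_strictAnti (θ : ℝ) (hθ : 0 < θ) :
    StrictAntiOn (fun t : ℝ => (1 + θ * t / (θ + 1)) * Real.exp (-θ * t)) (Set.Ici 0) := by
  have hθ1 : (0:ℝ) < θ + 1 := by linarith
  apply strictAntiOn_of_deriv_neg (convex_Ici 0)
  · exact (Continuous.mul (by continuity) (by continuity)).continuousOn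
  · intro x hx
    rw [interior_Ici] at hx
    have hd : HasDerivAt (fun t : ℝ => (1 + θ * t / (θ + 1)) * Real.exp (-θ * t))
        ((θ / (θ + 1)) * Real.exp (-θ * x) +
          (1 + θ * x / (θ + 1)) * (Real.exp (-θ * x) * (-θ))) x := by
      have h1 : HasDerivAt (fun t : ℝ => 1 + θ * t / (θ + 1)) (θ / (θ + 1)) x := by
        have := ((hasDerivAt_id x).const_mul θ).div_const (θ + 1)
        simpa using this.const_add 1
      have h2 : HasDerivAt (fun t : ℝ => Real.exp (-θ * t)) (Real.exp (-θ * x) * (-θ)) x := by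
        simpa using (((hasDerivAt_id x).const_mul (-θ)).exp)
      exact h1.mul h2
    rw [hd.deriv]
    have he : 0 < Real.exp (-θ * x) := Real.exp_pos _
    have hx' : 0 < x := hx
    have key : (θ / (θ + 1)) + (1 + θ * x / (θ + 1)) * (-θ) < 0 := by
      have hx2 : 0 < θ * x / (θ + 1) := by positivity
      have hlt : θ / (θ + 1) < θ := by
        rw [div_lt_iff₀ hθ1]; nlinarith
      nlinarith [mul_pos hx2 hθ]
    nlinarith [mul_pos he (neg_pos.mpr key)]

theorem lg_likelihood_ratio_order (θ p₁ p₂ : ℝ) (hθ : 0 < θ) (hp₁ : p₁ < 1) (hp₂ : p₂ < 1)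
    (h : p₁ > p₂) :
    StrictAntiOn (fun t : ℝ =>
      (θ^2 / (θ + 1) * (1 - p₁) * (1 + t) * Real.exp (-θ * t) *
          (1 - p₁ * ((1 + θ * t / (θ + 1)) * Real.exp (-θ * t)))⁻¹ ^ 2) /
        (θ^2 / (θ + 1) * (1 - p₂) * (1 + t) * Real.exp (-θ * t) *
          (1 - p₂ * ((1 + θ * t / (θ + 1)) * Real.exp (-θ * t)))⁻¹ ^ 2))
      (Set.Ioi 0) := by
  have hθ1 : (0:ℝ) < θ + 1 := by linarith
  set u : ℝ → ℝ := fun t => (1 + θ * t / (θ + 1)) * Real.exp (-θ * t) with hu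
  have hanti : StrictAntiOn u (Set.Ici 0) := lg_u_strictAnti θ hθ
  have hu0 : u 0 = 1 := by simp [hu]
  have hupos : ∀ x : ℝ, 0 < x → 0 < u x := by
    intro x hx
    apply mul_pos _ (Real.exp_pos _)
    have : 0 < θ * x / (θ + 1) := by positivity
    linarith
  have hult : ∀ x : ℝ, 0 < x → u x < 1 := by
    intro x hx
    have := hanti (Set.self_mem_Ici) (le_of_lt hx) hx
    rwa [hu0] at this
  have hden : ∀ (p x : ℝ), p < 1 → 0 < x → 0 < 1 - p * u x := by
    intro p x hp hx
    have h1 := hupos x hx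
    have h2 := hult x hx
    nlinarith
  -- key simplification
  have hform : ∀ x : ℝ, 0 < x →
      (θ^2 / (θ + 1) * (1 - p₁) * (1 + x) * Real.exp (-θ * x) *
          (1 - p₁ * ((1 + θ * x / (θ + 1)) * Real.exp (-θ * x)))⁻¹ ^ 2) /
        (θ^2 / (θ + 1) * (1 - p₂) * (1 + x) * Real.exp (-θ * x) *
          (1 - p₂ * ((1 + θ * x / (θ + 1)) * Real.exp (-θ * x)))⁻¹ ^ 2)
      = (1 - p₁) / (1 - p₂) * ((1 - p₂ * u x) / (1 - p₁ * u x)) ^ 2 := by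
    intro x hx
    have h1 : (1 - p₁ * u x) ≠ 0 := ne_of_gt (hden p₁ x hp₁ hx)
    have h2 : (1 - p₂ * u x) ≠ 0 := ne_of_gt (hden p₂ x hp₂ hx)
    have h3 : (1 - p₂) ≠ 0 := by linarith
    have hθ2 : θ ≠ 0 := ne_of_gt hθ
    have hθ1' : θ + 1 ≠ 0 := ne_of_gt hθ1
    have hx1 : (1 + x) ≠ 0 := by linarith
    have hexp : Real.exp (-θ * x) ≠ 0 := ne_of_gt (Real.exp_pos _)
    rw [show (1 + θ * x / (θ + 1)) * Real.exp (-θ * x) = u x from rfl]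
    field_simp
  intro s hs t ht hst
  simp only [Set.mem_Ioi] at hs ht
  simp only
  rw [hform s hs, hform t (lt_trans hs hst)]
  have ht' : 0 < t := lt_trans hs hst
  have hut : u t < u s := hanti (le_of_lt hs) (le_of_lt ht') hst
  have hus1 : u s < 1 := hult s hs
  have hut0 : 0 < u t := hupos t ht'
  have hC : 0 < (1 - p₁) / (1 - p₂) := by
    apply div_pos <;> linarith
  have hd1s : 0 < 1 - p₁ * u s := hden p₁ s hp₁ hs
  have hd2s : 0 < 1 - p₂ * u s := hden p₂ s hp₂ hs
  have hd1t : 0 < 1 - p₁ * u t := hden p₁ t hp₁ ht'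
  have hd2t : 0 < 1 - p₂ * u t := hden p₂ t hp₂ ht'
  have hrt : 0 < (1 - p₂ * u t) / (1 - p₁ * u t) := div_pos hd2t hd1t
  have hratio : (1 - p₂ * u t) / (1 - p₁ * u t) < (1 - p₂ * u s) / (1 - p₁ * u s) := by
    rw [div_lt_div_iff₀ hd1t hd1s]
    nlinarith [mul_pos (sub_pos.mpr h) (sub_pos.mpr hut)]
  have hsq : ((1 - p₂ * u t) / (1 - p₁ * u t)) ^ 2 < ((1 - p₂ * u s) / (1 - p₁ * u s)) ^ 2 :=
    pow_lt_pow_left₀ hratio (le_of_lt hrt) (by norm_num)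
  exact mul_lt_mul_of_pos_left hsq hC
end

section
/- The LG density f(y) = θ²/(θ+1)(1-p)(1+y)e^{-θy}(1 - p·u(y))^{-2}, with u(y)=(1+θy/(θ+1))e^{-θy}, is strictly decreasing on (0,∞) whenever p > (1-θ²)/(1+θ²). -/
set_option maxHeartbeats 1000000


lemma key_ineq (θ t : ℝ) (hθ : 0 < θ) (ht : 0 ≤ t) :
    (1+θ^2) * Real.exp t * (1-θ-t) ≤ (1-θ) * (1+(θ+t)^2) := by
  rcases le_or_gt (1-θ-t) 0 with h | h
  · have h1 : t + 1 ≤ Real.exp t := Real.add_one_le_exp t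
    have h2 : ((1+θ^2)*(1-θ-t)) * Real.exp t ≤ ((1+θ^2)*(1-θ-t)) * (1+t) := by
      apply mul_le_mul_of_nonpos_left (by linarith)
      nlinarith [sq_nonneg θ]
    have hpoly : (1+θ^2)*(1-θ-t)*(1+t) ≤ (1-θ) * (1+(θ+t)^2) := by
      nlinarith [mul_nonneg (sq_nonneg t) (show (0:ℝ) ≤ θ^2-θ+2 by nlinarith [sq_nonneg (2*θ-1)]),
        mul_nonneg (mul_nonneg ht hθ.le) (show (0:ℝ) ≤ θ^2-2*θ+3 by nlinarith [sq_nonneg (θ-1)])]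
    calc (1+θ^2) * Real.exp t * (1-θ-t) = ((1+θ^2)*(1-θ-t)) * Real.exp t := by ring
      _ ≤ ((1+θ^2)*(1-θ-t)) * (1+t) := h2
      _ = (1+θ^2)*(1-θ-t)*(1+t) := by ring
      _ ≤ (1-θ) * (1+(θ+t)^2) := hpoly
  · have ht1 : t < 1 := by nlinarith
    have h1 : (1-t) * Real.exp t ≤ 1 := by
      have h2 := Real.add_one_le_exp (-t)
      have h3 : (1-t) * Real.exp t ≤ Real.exp (-t) * Real.exp t :=
        mul_le_mul_of_nonneg_right (by linarith) (Real.exp_pos t).le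
      rw [← Real.exp_add] at h3; simpa using h3
    have hpoly : (1+θ^2)*(1-θ-t) ≤ (1-θ)*(1+(θ+t)^2)*(1-t) := by
      nlinarith [mul_nonneg (sq_nonneg t) (show (0:ℝ) ≤ 1-t by linarith),
        mul_nonneg (mul_nonneg ht hθ.le) (sq_nonneg (θ+t-1)),
        mul_nonneg (mul_nonneg ht hθ.le) (show (0:ℝ) ≤ 2-t by linarith)]
    have hc : 0 < (1+θ^2)*(1-θ-t) := by nlinarith [sq_nonneg θ]
    have h3 : (1+θ^2) * Real.exp t * (1-θ-t) * (1-t) ≤ (1+θ^2)*(1-θ-t) * 1 := by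
      calc (1+θ^2) * Real.exp t * (1-θ-t) * (1-t)
          = ((1+θ^2)*(1-θ-t)) * ((1-t) * Real.exp t) := by ring
        _ ≤ ((1+θ^2)*(1-θ-t)) * 1 := mul_le_mul_of_nonneg_left h1 hc.le
    have h4 : (1+θ^2) * Real.exp t * (1-θ-t) * (1-t) ≤ (1-θ)*(1+(θ+t)^2)*(1-t) := by
      linarith
    have h5 : 0 < 1 - t := by linarith
    exact le_of_mul_le_mul_right h4 h5

theorem lg_density_decreasing (θ p : ℝ) (hθ : 0 < θ) (hp : p < 1)
    (hcond : p > (1 - θ^2) / (1 + θ^2)) :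
    StrictAntiOn (fun y : ℝ =>
      θ^2 / (θ + 1) * (1 - p) * (1 + y) * Real.exp (-θ * y) *
        (1 - p * ((1 + θ * y / (θ + 1)) * Real.exp (-θ * y)))⁻¹ ^ 2)
      (Set.Ioi 0) := by
  have hθ1 : (0:ℝ) < θ + 1 := by linarith
  -- positivity of g
  have hgpos : ∀ y : ℝ, 0 ≤ y → 0 < 1 - p * ((1 + θ * y / (θ + 1)) * Real.exp (-θ * y)) := by
    intro y hy
    set u := (1 + θ * y / (θ + 1)) * Real.exp (-θ * y) with hu
    have hupos : 0 < u := by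
      apply mul_pos _ (Real.exp_pos _)
      have : 0 ≤ θ * y / (θ + 1) := by positivity
      linarith
    have hule : u ≤ 1 := by
      have h1 : θ * y + 1 ≤ Real.exp (θ * y) := Real.add_one_le_exp _
      have h2 : 1 + θ * y / (θ + 1) ≤ Real.exp (θ * y) := by
        have : θ * y / (θ + 1) ≤ θ * y := by
          rw [div_le_iff₀ hθ1]
          nlinarith [mul_nonneg hθ.le hy]
        linarith
      have h3 : u ≤ Real.exp (θ * y) * Real.exp (-θ * y) :=
        mul_le_mul_of_nonneg_right h2 (Real.exp_pos _).le
      rw [← Real.exp_add] at h3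
      simpa using h3
    rcases le_or_gt p 0 with hple | hpgt
    · nlinarith
    · nlinarith
  -- derivative negative on Ioi 0
  have hderiv : ∀ x ∈ Set.Ioi (0:ℝ), HasDerivAt (fun y : ℝ =>
      θ^2 / (θ + 1) * (1 - p) * (1 + y) * Real.exp (-θ * y) *
        (1 - p * ((1 + θ * y / (θ + 1)) * Real.exp (-θ * y)))⁻¹ ^ 2)
      (θ^2 / (θ + 1) * (1 - p) * Real.exp (-θ * x) *
        ((1 - θ - θ*x) * (1 - p * ((1 + θ * x / (θ + 1)) * Real.exp (-θ * x)))
          - 2*(1+x) * (p * θ^2 * (1+x) * Real.exp (-θ * x) / (θ+1)))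
        * ((1 - p * ((1 + θ * x / (θ + 1)) * Real.exp (-θ * x)))^3)⁻¹) x := by
    intro x hx
    have hxpos : (0:ℝ) < x := hx
    have hgx := hgpos x hxpos.le
    have hne : (1 - p * ((1 + θ * x / (θ + 1)) * Real.exp (-θ * x))) ≠ 0 := hgx.ne'
    have hA : HasDerivAt (fun y : ℝ => 1 + y) 1 x := by
      simpa using (hasDerivAt_id x).const_add 1
    have hE : HasDerivAt (fun y : ℝ => Real.exp (-θ * y)) (Real.exp (-θ * x) * (-θ * 1)) x :=
      ((hasDerivAt_id x).const_mul (-θ)).exp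
    have hL : HasDerivAt (fun y : ℝ => 1 + θ * y / (θ + 1)) (θ * 1 / (θ + 1)) x :=
      (((hasDerivAt_id x).const_mul θ).div_const (θ + 1)).const_add 1
    have hu := hL.mul hE
    have hg := (hu.const_mul p).const_sub 1
    have hinv := hg.inv hne
    have hpow := hinv.pow 2
    have hbig := ((hA.const_mul (θ^2 / (θ + 1) * (1 - p))).mul hE).mul hpow
    refine hbig.congr_deriv ?_
    simp only [Pi.mul_apply, Pi.pow_apply, Pi.inv_apply]
    have hEne : Real.exp (-θ * x) ≠ 0 := (Real.exp_pos _).ne'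
    set E := Real.exp (-θ * x) with hEdef
    set G := 1 - p * ((1 + θ * x / (θ + 1)) * E) with hGdef
    field_simp
    ring_nf
    field_simp
  -- sign of the bracket
  have hB : ∀ x ∈ Set.Ioi (0:ℝ),
      (1 - θ - θ*x) * (1 - p * ((1 + θ * x / (θ + 1)) * Real.exp (-θ * x)))
        - 2*(1+x) * (p * θ^2 * (1+x) * Real.exp (-θ * x) / (θ+1)) < 0 := by
    intro x hx
    have hxpos : (0:ℝ) < x := hx
    have hE2 : (0:ℝ) < Real.exp (-θ * x) := Real.exp_pos _
    have key := key_ineq θ (θ * x) hθ (by positivity)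
    -- multiply key by exp(-θx) > 0
    have hEE : Real.exp (θ * x) * Real.exp (-θ * x) = 1 := by
      rw [← Real.exp_add]; simp
    have key2 : (1+θ^2) * (1-θ-θ*x) ≤ (1-θ) * (1+(θ+θ*x)^2) * Real.exp (-θ*x) := by
      have := mul_le_mul_of_nonneg_right key hE2.le
      calc (1+θ^2) * (1-θ-θ*x)
          = (1+θ^2) * (Real.exp (θ*x) * Real.exp (-θ*x)) * (1-θ-θ*x) := by rw [hEE]; ring
        _ = (1+θ^2) * Real.exp (θ*x) * (1-θ-θ*x) * Real.exp (-θ*x) := by ring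
        _ ≤ (1-θ) * (1+(θ+θ*x)^2) * Real.exp (-θ*x) := this
    have hM : (0:ℝ) < 1 + θ^2 * (1+x)^2 := by positivity
    have hc2 : 1 - θ^2 < p * (1 + θ^2) := by
      rw [gt_iff_lt, div_lt_iff₀ (by positivity)] at hcond
      linarith
    -- φ' = (1+θ)(1-θ-θx) - p(1+θ²(1+x)²)·E2 < 0
    have hφ : (1+θ) * (1-θ-θ*x) - p * (1 + θ^2*(1+x)^2) * Real.exp (-θ*x) < 0 := by
      nlinarith [mul_le_mul_of_nonneg_left key2 (show (0:ℝ) ≤ 1+θ by linarith),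
        mul_pos (mul_pos hM hE2) (show (0:ℝ) < p*(1+θ^2) - (1-θ^2) by linarith),
        sq_nonneg θ]
    have hid : ((1 - θ - θ*x) * (1 - p * ((1 + θ * x / (θ + 1)) * Real.exp (-θ * x)))
        - 2*(1+x) * (p * θ^2 * (1+x) * Real.exp (-θ * x) / (θ+1))) * (θ + 1)
        = (1+θ) * (1-θ-θ*x) - p * (1 + θ^2*(1+x)^2) * Real.exp (-θ*x) := by
      field_simp
      ring
    nlinarith [hφ, hid, hθ1]
  -- conclude
  have hderivneg : ∀ x ∈ interior (Set.Ioi (0:ℝ)), deriv (fun y : ℝ =>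
      θ^2 / (θ + 1) * (1 - p) * (1 + y) * Real.exp (-θ * y) *
        (1 - p * ((1 + θ * y / (θ + 1)) * Real.exp (-θ * y)))⁻¹ ^ 2) x < 0 := by
    rw [interior_Ioi]
    intro x hx
    rw [(hderiv x hx).deriv]
    have hgx := hgpos x (le_of_lt hx)
    have hc : (0:ℝ) < θ^2 / (θ + 1) * (1 - p) := by
      apply mul_pos (by positivity) (by linarith)
    apply mul_neg_of_neg_of_pos
    · exact mul_neg_of_pos_of_neg (mul_pos hc (Real.exp_pos _)) (hB x hx)
    · positivity
  apply strictAntiOn_of_deriv_neg (convex_Ioi 0)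
  · intro x hx
    exact ((hderiv x hx).differentiableAt.continuousAt).continuousWithinAt
  · exact hderivneg
end

section
/- The sign of the derivative of log h(y), where h is the LG hazard rate, equals the sign of e^{θy}(1+θ) - p(1+θ+θy)(1+(1+y)²θ²) for all y > 0. -/
set_option maxHeartbeats 1000000

private lemma sign_pos_mul (c x : ℝ) (hc : 0 < c) : Real.sign (c * x) = Real.sign x := by
  rcases lt_trichotomy x 0 with h|h|h
  · rw [Real.sign_of_neg h, Real.sign_of_neg (by nlinarith)]
  · simp [h]
  · rw [Real.sign_of_pos h, Real.sign_of_pos (by nlinarith)]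

theorem lg_log_hazard_deriv_sign (θ p : ℝ) (hθ : 0 < θ) (hp : p < 1) :
    ∀ y : ℝ, 0 < y →
      Real.sign (deriv (fun x : ℝ => Real.log
          (θ^2 * (θ + 1) * (1 + x) /
            ((1 + θ + θ * x) * (θ + 1 - p * (1 + θ + θ * x) * Real.exp (-θ * x))))) y) =
        Real.sign (Real.exp (θ * y) * (1 + θ) -
          p * (1 + θ + θ * y) * (1 + (1 + y)^2 * θ^2)) := by
  intro y hy
  have hEpos : 0 < Real.exp (θ * y) := Real.exp_pos _
  have hepos : 0 < Real.exp (-θ * y) := Real.exp_pos _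
  have hBpos : 0 < 1 + θ + θ * y := by positivity
  have hexpge : θ * y + 1 ≤ Real.exp (θ * y) := Real.add_one_le_exp _
  have hee : Real.exp (-θ * y) * Real.exp (θ * y) = 1 := by
    rw [← Real.exp_add]; ring_nf; exact Real.exp_zero
  have hBe : (1 + θ + θ * y) * Real.exp (-θ * y) < θ + 1 := by
    have h1 : 1 + θ + θ * y < (θ + 1) * Real.exp (θ * y) := by
      nlinarith [mul_le_mul_of_nonneg_left hexpge (by positivity : (0:ℝ) ≤ θ + 1),
        mul_pos (mul_pos hθ hθ) hy]
    nlinarith [mul_lt_mul_of_pos_right h1 hepos]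
  have hX : 0 < (1 + θ + θ * y) * Real.exp (-θ * y) := mul_pos hBpos hepos
  have hCpos : 0 < θ + 1 - p * ((1 + θ + θ * y) * Real.exp (-θ * y)) := by
    rcases le_or_gt p 0 with h|h
    · nlinarith [mul_nonneg (neg_nonneg.mpr h) hX.le]
    · nlinarith [mul_lt_mul_of_pos_right hp hX]
  have hupos : 0 < θ^2 * (θ + 1) * (1 + y) := by positivity
  have hvpos : 0 < (1 + θ + θ * y) * (θ + 1 - p * ((1 + θ + θ * y) * Real.exp (-θ * y))) :=
    mul_pos hBpos hCpos
  have hu : HasDerivAt (fun x : ℝ => θ^2 * (θ + 1) * (1 + x)) (θ^2 * (θ + 1)) y := by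
    simpa using ((hasDerivAt_id y).const_add (1:ℝ)).const_mul (θ^2 * (θ + 1))
  have hBd : HasDerivAt (fun x : ℝ => 1 + θ + θ * x) θ y := by
    simpa using ((hasDerivAt_id y).const_mul θ).const_add (1 + θ)
  have hed : HasDerivAt (fun x : ℝ => Real.exp (-θ * x)) (Real.exp (-θ * y) * (-θ)) y := by
    simpa using (((hasDerivAt_id y).const_mul (-θ)).exp)
  have hCd : HasDerivAt (fun x : ℝ => θ + 1 - p * ((1 + θ + θ * x) * Real.exp (-θ * x)))
      (-(p * (θ * Real.exp (-θ * y) + (1 + θ + θ * y) * (Real.exp (-θ * y) * (-θ))))) y :=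
    ((hBd.mul hed).const_mul p).const_sub (θ + 1)
  have hvd := hBd.mul hCd
  have hfd := hu.div hvd (ne_of_gt hvpos)
  have hfpos : 0 < θ^2 * (θ + 1) * (1 + y) /
      ((1 + θ + θ * y) * (θ + 1 - p * ((1 + θ + θ * y) * Real.exp (-θ * y)))) :=
    div_pos hupos hvpos
  have hlog := hfd.log (ne_of_gt hfpos)
  have hder := hlog.deriv
  have hfun : (fun x : ℝ => Real.log
      (θ^2 * (θ + 1) * (1 + x) /
        ((1 + θ + θ * x) * (θ + 1 - p * (1 + θ + θ * x) * Real.exp (-θ * x))))) =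
      (fun x : ℝ => Real.log ((fun x : ℝ => θ^2 * (θ + 1) * (1 + x)) x /
        ((fun x : ℝ => 1 + θ + θ * x) x *
         (fun x : ℝ => θ + 1 - p * ((1 + θ + θ * x) * Real.exp (-θ * x))) x))) := by
    funext x; simp only []; congr 2; ring
  have hcpos : 0 < Real.exp (-θ * y) / ((1 + y) * ((1 + θ + θ * y) *
      (θ + 1 - p * ((1 + θ + θ * y) * Real.exp (-θ * y))))) := by positivity
  have hd2 : deriv (fun x : ℝ => Real.log
      (θ^2 * (θ + 1) * (1 + x) /
        ((1 + θ + θ * x) * (θ + 1 - p * (1 + θ + θ * x) * Real.exp (-θ * x))))) y =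
      (Real.exp (-θ * y) / ((1 + y) * ((1 + θ + θ * y) *
        (θ + 1 - p * ((1 + θ + θ * y) * Real.exp (-θ * y)))))) *
      (Real.exp (θ * y) * (1 + θ) - p * (1 + θ + θ * y) * (1 + (1 + y)^2 * θ^2)) := by
    rw [hfun]; erw [hder]; simp only [Pi.div_apply, Pi.mul_apply]
    have h1 : (1:ℝ) + y ≠ 0 := by positivity
    have h2 : (1 + θ + θ * y) ≠ 0 := ne_of_gt hBpos
    have h3 : (θ + 1 - p * ((1 + θ + θ * y) * Real.exp (-θ * y))) ≠ 0 := ne_of_gt hCpos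
    have h5 : Real.exp (-θ * y) ≠ 0 := ne_of_gt hepos
    have hEe : Real.exp (θ * y) = (Real.exp (-θ * y))⁻¹ := by
      rw [show -θ * y = -(θ * y) by ring, Real.exp_neg, inv_inv]
    rw [hEe]
    simp only [neg_mul] at h3 h5 ⊢
    field_simp
    ring
  rw [hd2, sign_pos_mul _ _ hcpos]
end

section
/- If p > 1/(1+θ²) (with p < 1, θ > 0), then the LG hazard rate h is bathtub-shaped: there exists a unique y* > 0 such that h is decreasing on (0, y*) and increasing on (y*, ∞). -/
set_option maxHeartbeats 800000

open Real Set Filter Topology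

noncomputable def lgPhi (θ p y : ℝ) : ℝ :=
  θ + 1 - p * ((1 + θ + θ * y) * (1 + θ ^ 2 * (1 + y) ^ 2)) * Real.exp (-θ * y)

lemma lgPhi_hasDerivAt (θ p y : ℝ) :
    HasDerivAt (lgPhi θ p)
      (p * θ * (θ * (1 + y)) * Real.exp (-θ * y) * ((θ * (1 + y) - 1) ^ 2 - 2)) y := by
  have ha : HasDerivAt (fun y : ℝ => 1 + θ + θ * y) θ y := by
    simpa using ((hasDerivAt_id y).const_mul θ).const_add (1 + θ)
  have hb : HasDerivAt (fun y : ℝ => 1 + θ ^ 2 * (1 + y) ^ 2)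
      (θ ^ 2 * (2 * (1 + y))) y := by
    have h1 : HasDerivAt (fun y : ℝ => (1 + y) ^ 2) (2 * (1 + y)) y := by
      have := (((hasDerivAt_id y).const_add 1).fun_pow 2)
      simpa using this
    simpa using (h1.const_mul (θ ^ 2)).const_add 1
  have he : HasDerivAt (fun y : ℝ => Real.exp (-θ * y)) (Real.exp (-θ * y) * (-θ)) y := by
    have h1 : HasDerivAt (fun y : ℝ => -θ * y) (-θ) y := by
      simpa using (hasDerivAt_id y).const_mul (-θ)
    exact h1.exp
  have hq := ha.fun_mul hb
  have h := ((hq.const_mul p).fun_mul he).const_sub (θ + 1)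
  unfold lgPhi
  refine h.congr_deriv ?_
  ring

lemma lgPhi_sign (θ p : ℝ) (hθ : 0 < θ) (hp : p < 1) (hp0 : 0 < p)
    (hcond : 1 < p * (1 + θ ^ 2)) :
    ∃ ystar : ℝ, 0 < ystar ∧ (∀ y ∈ Ioo 0 ystar, lgPhi θ p y < 0) ∧
      ∀ y ∈ Ioi ystar, 0 < lgPhi θ p y := by
  have hdiff : Differentiable ℝ (lgPhi θ p) :=
    fun y => (lgPhi_hasDerivAt θ p y).differentiableAt
  have hcont : Continuous (lgPhi θ p) := hdiff.continuous
  have hs2 : Real.sqrt 2 ^ 2 = 2 := Real.sq_sqrt (by norm_num)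
  have hs2' : (1 : ℝ) ≤ Real.sqrt 2 := by
    nlinarith [Real.sqrt_nonneg 2]
  set y0 : ℝ := max 0 ((1 + Real.sqrt 2) / θ - 1) with hy0def
  have hy00 : 0 ≤ y0 := le_max_left _ _
  -- strictly monotone on [y0, ∞)
  have hmono : StrictMonoOn (lgPhi θ p) (Ici y0) := by
    apply strictMonoOn_of_deriv_pos (convex_Ici _) hcont.continuousOn
    intro y hy
    rw [interior_Ici] at hy
    rw [(lgPhi_hasDerivAt θ p y).deriv]
    have h1 : (1 + Real.sqrt 2) / θ - 1 < y := lt_of_le_of_lt (le_max_right _ _) hy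
    have ht : 1 + Real.sqrt 2 < θ * (1 + y) := by
      have h2 : (1 + Real.sqrt 2) / θ < 1 + y := by linarith
      have := (div_lt_iff₀ hθ).mp h2
      nlinarith [this]
    have htpos : 0 < θ * (1 + y) := by nlinarith [Real.sqrt_nonneg 2]
    have h2 : 0 < (θ * (1 + y) - 1) ^ 2 - 2 := by nlinarith
    exact mul_pos (mul_pos (mul_pos (mul_pos hp0 hθ) htpos) (Real.exp_pos _)) h2
  -- antitone on [0, y0]
  have hanti : AntitoneOn (lgPhi θ p) (Icc 0 y0) := by
    apply antitoneOn_of_deriv_nonpos (convex_Icc _ _) hcont.continuousOn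
      (hdiff.differentiableOn)
    intro y hy
    rw [interior_Icc] at hy
    rw [(lgPhi_hasDerivAt θ p y).deriv]
    have hy0pos : 0 < y := hy.1
    have h1 : y < (1 + Real.sqrt 2) / θ - 1 := by
      rcases lt_max_iff.mp hy.2 with h | h
      · linarith
      · exact h
    have ht : θ * (1 + y) < 1 + Real.sqrt 2 := by
      have h2 : 1 + y < (1 + Real.sqrt 2) / θ := by linarith
      have := (lt_div_iff₀ hθ).mp h2
      nlinarith [this]
    have htpos : 0 < θ * (1 + y) := by positivity
    have h2 : (θ * (1 + y) - 1) ^ 2 - 2 ≤ 0 := by nlinarith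
    exact mul_nonpos_of_nonneg_of_nonpos
      (by positivity) h2
  have hphi0 : lgPhi θ p 0 < 0 := by
    simp only [lgPhi, mul_zero, neg_zero, Real.exp_zero, mul_one]
    nlinarith
  have hy0neg : lgPhi θ p y0 < 0 :=
    lt_of_le_of_lt (hanti (left_mem_Icc.mpr hy00) (right_mem_Icc.mpr hy00) hy00) hphi0
  -- limit at infinity
  have hg : Tendsto (fun t : ℝ => (1 + t) * (1 + t ^ 2) * Real.exp (-t)) atTop (𝓝 0) := by
    have h0 := Real.tendsto_pow_mul_exp_neg_atTop_nhds_zero 0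
    have h1 := Real.tendsto_pow_mul_exp_neg_atTop_nhds_zero 1
    have h2 := Real.tendsto_pow_mul_exp_neg_atTop_nhds_zero 2
    have h3 := Real.tendsto_pow_mul_exp_neg_atTop_nhds_zero 3
    have := ((h0.add h1).add h2).add h3
    simp only [add_zero] at this
    refine this.congr fun t => ?_
    ring
  have hT : Tendsto (fun y : ℝ => θ * (1 + y)) atTop atTop := by
    apply Tendsto.const_mul_atTop hθ
    exact tendsto_atTop_add_const_left _ 1 tendsto_id
  have hlim : Tendsto (lgPhi θ p) atTop (𝓝 (θ + 1)) := by
    have hcomp := (hg.comp hT).const_mul (p * Real.exp θ)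
    have h := (tendsto_const_nhds : Tendsto (fun _ : ℝ => θ + 1) atTop (𝓝 (θ + 1))).sub hcomp
    rw [mul_zero, sub_zero] at h
    refine h.congr fun y => ?_
    show θ + 1 - p * Real.exp θ * ((1 + θ * (1 + y)) * (1 + (θ * (1 + y)) ^ 2) *
      Real.exp (-(θ * (1 + y)))) = lgPhi θ p y
    have : Real.exp (-θ * y) = Real.exp θ * Real.exp (-(θ * (1 + y))) := by
      rw [← Real.exp_add]; ring_nf
    rw [lgPhi, this]
    ring
  have hpos_ev : ∀ᶠ y in atTop, 0 < lgPhi θ p y :=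
    hlim.eventually (eventually_gt_nhds (by linarith : (0 : ℝ) < θ + 1))
  obtain ⟨b, hbpos, hby0⟩ := (hpos_ev.and (eventually_gt_atTop y0)).exists
  have hsub : (0 : ℝ) ∈ Ioo (lgPhi θ p y0) (lgPhi θ p b) := ⟨hy0neg, hbpos⟩
  obtain ⟨ystar, hymem, hyval⟩ :=
    intermediate_value_Ioo hby0.le hcont.continuousOn hsub
  refine ⟨ystar, lt_of_le_of_lt hy00 hymem.1, ?_, ?_⟩
  · intro y hy
    rcases le_or_gt y y0 with h | h
    · exact lt_of_le_of_lt
        (hanti (left_mem_Icc.mpr hy00) ⟨hy.1.le, h⟩ hy.1.le) hphi0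
    · have := hmono (mem_Ici.mpr h.le) (mem_Ici.mpr hymem.1.le) hy.2
      rw [hyval] at this
      exact this
  · intro y hy
    have := hmono (mem_Ici.mpr hymem.1.le)
      (mem_Ici.mpr (le_trans hymem.1.le (le_of_lt hy))) hy
    rw [hyval] at this
    exact this

theorem lg_hazard_bathtub (θ p : ℝ) (hθ : 0 < θ) (hp : p < 1)
    (hcond : p > 1 / (1 + θ^2)) :
    ∃! ystar : ℝ, 0 < ystar ∧
      StrictAntiOn (fun y : ℝ =>
        θ^2 * (θ + 1) * (1 + y) /
          ((1 + θ + θ * y) * (θ + 1 - p * (1 + θ + θ * y) * Real.exp (-θ * y))))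
        (Set.Ioo 0 ystar) ∧
      StrictMonoOn (fun y : ℝ =>
        θ^2 * (θ + 1) * (1 + y) /
          ((1 + θ + θ * y) * (θ + 1 - p * (1 + θ + θ * y) * Real.exp (-θ * y))))
        (Set.Ioi ystar) := by
  have h1θ : (0 : ℝ) < 1 + θ ^ 2 := by positivity
  have hp0 : 0 < p := lt_trans (by positivity) hcond
  have hcond' : 1 < p * (1 + θ ^ 2) := by
    rw [gt_iff_lt, div_lt_iff₀ h1θ] at hcond
    linarith
  set f : ℝ → ℝ := fun y : ℝ =>
    θ^2 * (θ + 1) * (1 + y) /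
      ((1 + θ + θ * y) * (θ + 1 - p * (1 + θ + θ * y) * Real.exp (-θ * y))) with hfdef
  set D : ℝ → ℝ := fun y : ℝ =>
    (1 + θ + θ * y) * (θ + 1 - p * (1 + θ + θ * y) * Real.exp (-θ * y)) with hDdef
  have hD : ∀ y : ℝ, 0 ≤ y → 0 < D y := by
    intro y hy
    have hA : 0 < 1 + θ + θ * y := by nlinarith
    have epos := Real.exp_pos (-θ * y)
    have e1 : Real.exp (θ * y) * Real.exp (-θ * y) = 1 := by
      rw [← Real.exp_add]; ring_nf; exact Real.exp_zero
    have hexp : θ * y + 1 ≤ Real.exp (θ * y) := Real.add_one_le_exp _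
    have h1 : 0 ≤ (1 + θ) * Real.exp (θ * y) - (1 + θ + θ * y) := by nlinarith
    have h2 : (1 + θ + θ * y) * Real.exp (-θ * y) ≤ 1 + θ := by
      nlinarith [mul_nonneg h1 epos.le]
    have h3 : 0 < (1 + θ + θ * y) * Real.exp (-θ * y) := mul_pos hA epos
    have hE : p * (1 + θ + θ * y) * Real.exp (-θ * y) < θ + 1 := by nlinarith
    exact mul_pos hA (by linarith)
  have hf : ∀ y : ℝ, 0 ≤ y →
      HasDerivAt f (θ ^ 2 * (θ + 1) * lgPhi θ p y / (D y) ^ 2) y := by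
    intro y hy
    have hDy := (hD y hy).ne'
    have hN : HasDerivAt (fun y : ℝ => θ ^ 2 * (θ + 1) * (1 + y)) (θ ^ 2 * (θ + 1)) y := by
      simpa using (((hasDerivAt_id y).const_add 1).const_mul (θ ^ 2 * (θ + 1)))
    have ha : HasDerivAt (fun y : ℝ => 1 + θ + θ * y) θ y := by
      simpa using ((hasDerivAt_id y).const_mul θ).const_add (1 + θ)
    have he : HasDerivAt (fun y : ℝ => Real.exp (-θ * y)) (Real.exp (-θ * y) * (-θ)) y := by
      have h1 : HasDerivAt (fun y : ℝ => -θ * y) (-θ) y := by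
        simpa using (hasDerivAt_id y).const_mul (-θ)
      exact h1.exp
    have hEE : HasDerivAt (fun y : ℝ => θ + 1 - p * (1 + θ + θ * y) * Real.exp (-θ * y))
        (-(p * θ * Real.exp (-θ * y) + p * (1 + θ + θ * y) * (Real.exp (-θ * y) * (-θ)))) y := by
      have := ((ha.const_mul p).fun_mul he).const_sub (θ + 1)
      convert this using 1
    have hDd := ha.fun_mul hEE
    have hdiv := hN.fun_div hDd hDy
    refine hdiv.congr_deriv (Eq.symm ?_)
    rw [hDdef]
    have epos := (Real.exp_pos (-θ * y)).ne'
    field_simp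
    rw [lgPhi]
    ring
  obtain ⟨ystar, hys, hneg, hpos⟩ := lgPhi_sign θ p hθ hp hp0 hcond'
  have hanti : StrictAntiOn f (Set.Ioo 0 ystar) := by
    apply strictAntiOn_of_deriv_neg (convex_Ioo _ _)
    · exact fun y hy => ((hf y hy.1.le).continuousAt).continuousWithinAt
    · intro y hy
      rw [interior_Ioo] at hy
      rw [(hf y hy.1.le).deriv]
      apply div_neg_of_neg_of_pos
      · exact mul_neg_of_pos_of_neg (by positivity) (hneg y hy)
      · exact pow_pos (hD y hy.1.le) 2
  have hmono : StrictMonoOn f (Set.Ioi ystar) := by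
    apply strictMonoOn_of_deriv_pos (convex_Ioi _)
    · exact fun y hy => ((hf y (le_trans hys.le (le_of_lt hy))).continuousAt).continuousWithinAt
    · intro y hy
      rw [interior_Ioi] at hy
      rw [(hf y (le_trans hys.le (le_of_lt hy))).deriv]
      exact div_pos (mul_pos (by positivity) (hpos y hy))
        (pow_pos (hD y (le_trans hys.le (le_of_lt hy))) 2)
  refine ⟨ystar, ⟨hys, hanti, hmono⟩, ?_⟩
  rintro y' ⟨hy'0, hanti', hmono'⟩
  by_contra hne
  rcases lt_or_gt_of_ne hne with h | h
  -- y' < ystar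
  · set a := y' + (ystar - y') / 3 with hadef
    set b := y' + 2 * (ystar - y') / 3 with hbdef
    have hab : a < b := by rw [hadef, hbdef]; linarith
    have h1 : f a < f b := hmono' (by simp only [mem_Ioi, hadef]; linarith)
      (by simp only [mem_Ioi, hbdef]; linarith) hab
    have h2 : f b < f a := hanti ⟨by rw [hadef]; linarith, by rw [hadef]; linarith⟩
      ⟨by rw [hbdef]; linarith, by rw [hbdef]; linarith⟩ hab
    linarith
  -- ystar < y'
  · set a := ystar + (y' - ystar) / 3 with hadef
    set b := ystar + 2 * (y' - ystar) / 3 with hbdef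
    have hab : a < b := by rw [hadef, hbdef]; linarith
    have h1 : f a < f b := hmono (by simp only [mem_Ioi, hadef]; linarith)
      (by simp only [mem_Ioi, hbdef]; linarith) hab
    have h2 : f b < f a := hanti' ⟨by rw [hadef]; linarith, by rw [hadef]; linarith⟩
      ⟨by rw [hbdef]; linarith, by rw [hbdef]; linarith⟩ hab
    linarith
end
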